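/- Let P ⊂ ℝⁿ be a compact convex set with nonempty interior and support function F_P. Let F, F₀ : ℝⁿ → ℝ be convex functions whose subgradient images ∇F(ℝⁿ) and ∇F₀(ℝⁿ) are contained in P, let G be the Legendre transform of F, and suppose that C_P := sup_{x ∈ ℝⁿ} (F_P(x) − F₀(x)) < +∞ and that |G| is Lebesgue integrable on P. Then sup_{x ∈ ℝⁿ} (F(x) − F₀(x)) ≤ C_P + (1 / ((2^{1/(n+1)} − 1) · vol(P))) · ∫_P |G(s)| ds. -/

import Mathlib

/-!
Fix `x`, a subgradient `s₀ ∈ P` of `F` at `x`, and `M = F x - ⟪x, s₀⟫`, so that `G s₀ ≤ -M`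
and `F x - F₀ x ≤ C_P + M`; it remains to show `M t vol P ≤ ∫_P |G|` where `(1 + t)^(n+1) = 2`.
Let `N = P ∩ {G ≤ 0}` and `N_r = s₀ + r (N - s₀)`. Convexity of `G` along rays from `s₀` gives
`|G| ≥ (1 - r) M` on `N_r` for `r < 1` and `|G| ≥ (r - 1) M` on `P \ N_r` for `r > 1`, so
`M` times the length of the set of admissible `r ∈ (0, 1) ∪ (1, 1 + t)` at a point is at most
`|G|` there. Integrating over `P` and exchanging the integrals, the left side becomes
`M (∫₀¹ vol N_r dr + ∫₁^{1+t} vol (P \ N_r) dr)`, and as `vol N_r = r^n vol N` the first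
integral equals `∫₁^{1+t} vol N_r dr`, leaving at least `M t vol P`.
-/

open MeasureTheory Topology RealInnerProductSpace Set
open AffineMap (homothety lineMap)

section Dilation

variable {E : Type*} [NormedAddCommGroup E] [NormedSpace ℝ E]

theorem AffineMap.homothety_homothety_inv (c : E) {r : ℝ} (hr : r ≠ 0) (y : E) :
    homothety c r (homothety c r⁻¹ y) = y := by
  rw [← AffineMap.homothety_mul_apply, mul_inv_cancel₀ hr, AffineMap.homothety_one]
  rfl

theorem AffineMap.preimage_homothety_inv (c : E) {r : ℝ} (hr : r ≠ 0) (s : Set E) :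
    homothety c r⁻¹ ⁻¹' s = homothety c r '' s :=
  congrFun (image_eq_preimage_of_inverse
    (fun y => by simpa using AffineMap.homothety_homothety_inv c (inv_ne_zero hr) y)
    (AffineMap.homothety_homothety_inv c hr)).symm s

theorem StarConvex.homothety_mem {c y : E} {s : Set E} (hs : StarConvex ℝ c s) (hy : y ∈ s)
    {r : ℝ} (hr₀ : 0 ≤ r) (hr₁ : r ≤ 1) : homothety c r y ∈ s := by
  rw [AffineMap.homothety_eq_lineMap, AffineMap.lineMap_apply_module]
  exact hs hy (sub_nonneg.2 hr₁) hr₀ (sub_add_cancel 1 r)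

theorem StarConvex.preimage_homothety_inv_subset {c : E} {s : Set E} (hs : StarConvex ℝ c s)
    {r : ℝ} (hr₀ : 0 < r) (hr₁ : r ≤ 1) : homothety c r⁻¹ ⁻¹' s ⊆ s := fun y hy => by
  simpa [AffineMap.homothety_homothety_inv c hr₀.ne'] using hs.homothety_mem hy hr₀.le hr₁

theorem StarConvex.subset_preimage_homothety_inv {c : E} {s : Set E} (hs : StarConvex ℝ c s)
    {r : ℝ} (hr : 1 ≤ r) : s ⊆ homothety c r⁻¹ ⁻¹' s := fun _ hy =>
  hs.homothety_mem hy (by positivity) (inv_le_one_of_one_le₀ hr)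

/-- The chord inequality for `g` on the segments from `c`, with `m` in place of `g c`. -/
def ConvexAlongRays (g : E → EReal) (c : E) (m : ℝ) : Prop :=
  ∀ y (A : ℝ) ⦃r : ℝ⦄, 0 ≤ r → r ≤ 1 → g y ≤ A → g (homothety c r y) ≤ ↑(r * A + (1 - r) * m)

variable {g : E → EReal} {c : E} {m : ℝ}

theorem ConvexAlongRays.starConvex_preimage_Iic (hg : ConvexAlongRays g c m) (hm : m ≤ 0) :
    StarConvex ℝ c (g ⁻¹' Iic 0) := by
  intro y hy a b ha hb hab
  have := hg y 0 hb (by linarith) (by simpa using hy)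
  rw [AffineMap.homothety_eq_lineMap, AffineMap.lineMap_apply_module,
    show 1 - b = a by linarith] at this
  simp only [mem_preimage, mem_Iic]
  exact this.trans (EReal.coe_nonpos.2 (by nlinarith))

theorem ConvexAlongRays.le_of_mem_preimage_homothety_inv (hg : ConvexAlongRays g c m)
    {r : ℝ} (hr₀ : 0 < r) (hr₁ : r ≤ 1) {y : E} (hy : y ∈ homothety c r⁻¹ ⁻¹' (g ⁻¹' Iic 0)) :
    g y ≤ ↑((1 - r) * m) := by
  have := hg _ 0 hr₀.le hr₁ (by simpa using hy)
  rwa [AffineMap.homothety_homothety_inv c hr₀.ne', mul_zero, zero_add] at this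

theorem ConvexAlongRays.lt_of_notMem_preimage_homothety_inv (hg : ConvexAlongRays g c m)
    {P : Set E} (hP : StarConvex ℝ c P) {r : ℝ} (hr : 1 ≤ r) {y : E} (hy : y ∈ P)
    (hyN : y ∉ homothety c r⁻¹ ⁻¹' (P ∩ g ⁻¹' Iic 0)) : ↑((1 - r) * m) < g y := by
  have hr₁ : r⁻¹ ≤ 1 := inv_le_one_of_one_le₀ hr
  refine not_le.1 fun hle => hyN ⟨hP.homothety_mem hy (by positivity) hr₁, ?_⟩
  have := hg y _ (by positivity) hr₁ hle
  rw [show r⁻¹ * ((1 - r) * m) + (1 - r⁻¹) * m = 0 by field_simp; ring] at this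
  simpa using this

end Dilation

theorem ofReal_mul_volume_le_of_subset_Icc {A : Set ℝ} {a b M : ℝ} (hM : 0 ≤ M)
    (hA : A ⊆ Icc a b) : ENNReal.ofReal M * volume A ≤ ENNReal.ofReal (M * (b - a)) := by
  rw [ENNReal.ofReal_mul hM, ← Real.volume_Icc]
  gcongr

theorem lintegral_Ioo_ofReal_pow {a b : ℝ} (ha : 0 ≤ a) (hab : a ≤ b) (d : ℕ) :
    ∫⁻ r in Ioo a b, ENNReal.ofReal (r ^ d) =
      ENNReal.ofReal ((b ^ (d + 1) - a ^ (d + 1)) / ((d : ℝ) + 1)) := by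
  rw [← ofReal_integral_eq_lintegral_ofReal
    ((continuous_pow d).integrableOn_Icc.mono_set Ioo_subset_Icc_self)
    ((ae_restrict_iff' measurableSet_Ioo).2 (ae_of_all _ fun r hr => by
      have := ha.trans hr.1.le; positivity)),
    ← integral_Ioc_eq_integral_Ioo, ← intervalIntegral.integral_of_le hab, integral_pow]

theorem setLIntegral_measure_restrict_comm {α β : Type*} [MeasurableSpace α]
    [MeasurableSpace β] {μ : Measure α} {ν : Measure β} [SFinite μ] [SFinite ν] {I : Set α}
    {P : Set β} (hI : MeasurableSet I) {T : α → Set β}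
    (hT : MeasurableSet {p : α × β | p.2 ∈ T p.1}) :
    ∫⁻ a in I, ν.restrict P (T a) ∂μ = ∫⁻ b in P, μ ({a | b ∈ T a} ∩ I) ∂ν := by
  refine ((Measure.prod_apply (μ := μ.restrict I) (ν := ν.restrict P) hT).symm.trans
    (Measure.prod_apply_symm hT)).trans ?_
  simp_rw [Measure.restrict_apply' hI]
  rfl

section Haar

variable {E : Type*} [NormedAddCommGroup E] [NormedSpace ℝ E] [FiniteDimensional ℝ E]
  [MeasurableSpace E] [BorelSpace E] (μ : Measure E) [μ.IsAddHaarMeasure]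

theorem addHaar_preimage_homothety_inv (c : E) {r : ℝ} (hr : 0 < r) (s : Set E) :
    μ (homothety c r⁻¹ ⁻¹' s) = ENNReal.ofReal (r ^ Module.finrank ℝ E) * μ s := by
  rw [AffineMap.preimage_homothety_inv c hr.ne', Measure.addHaar_image_homothety,
    abs_of_pos (by positivity)]

/-- The dilates of `N` by factors in `(0, 1)` and in `(1, 1 + t)` have the same total volume:
this is what fixes `t`. Dilates are written as preimages under `homothety c r⁻¹`, which makes
them jointly measurable in `(r, y)`. -/
theorem ofReal_mul_measure_le_lintegral_measure_dilates (c : E) (N P : Set E) {t : ℝ}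
    (ht : 0 ≤ t) (hpow : (1 + t) ^ (Module.finrank ℝ E + 1) = 2) :
    ENNReal.ofReal t * μ P ≤ (∫⁻ r in Ioo (0 : ℝ) 1, μ (homothety c r⁻¹ ⁻¹' N)) +
      ∫⁻ r in Ioo (1 : ℝ) (1 + t), μ (P \ homothety c r⁻¹ ⁻¹' N) := by
  set d := Module.finrank ℝ E
  have hdil : ∫⁻ r in Ioo (0 : ℝ) 1, μ (homothety c r⁻¹ ⁻¹' N) =
      (∫⁻ r in Ioo (0 : ℝ) 1, ENNReal.ofReal (r ^ d)) * μ N := by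
    rw [← lintegral_mul_const _ (by fun_prop)]
    exact setLIntegral_congr_fun measurableSet_Ioo fun r hr =>
      addHaar_preimage_homothety_inv μ c hr.1 N
  have hvol : ∫⁻ r in Ioo (1 : ℝ) (1 + t), ENNReal.ofReal (r ^ d) =
      ∫⁻ r in Ioo (0 : ℝ) 1, ENNReal.ofReal (r ^ d) := by
    rw [lintegral_Ioo_ofReal_pow zero_le_one (by linarith), hpow,
      lintegral_Ioo_ofReal_pow le_rfl zero_le_one]
    norm_num
  calc ENNReal.ofReal t * μ P = ∫⁻ _ in Ioo 1 (1 + t), μ P := by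
        rw [setLIntegral_const, Real.volume_Ioo, add_sub_cancel_left, mul_comm]
    _ ≤ ∫⁻ r in Ioo (1 : ℝ) (1 + t),
          (ENNReal.ofReal (r ^ d) * μ N + μ (P \ homothety c r⁻¹ ⁻¹' N)) := by
        refine setLIntegral_mono' measurableSet_Ioo fun r hr => ?_
        rw [← addHaar_preimage_homothety_inv μ c (zero_lt_one.trans hr.1)]
        exact (measure_le_inter_add_sdiff μ P _).trans (by gcongr; exact inter_subset_right)
    _ = _ := by
        rw [lintegral_add_left (by fun_prop), lintegral_mul_const _ (by fun_prop), hvol, ← hdil]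

end Haar

namespace ConvexAlongRays

variable {E : Type*} [NormedAddCommGroup E] [NormedSpace ℝ E]
  {g : E → EReal} {c : E} {M : ℝ} {P : Set E}

theorem ofReal_mul_volume_le_abs (hg : ConvexAlongRays g c (-M)) (hM : 0 < M)
    (hP : StarConvex ℝ c P) {y : E} (hy : y ∈ P) :
    ENNReal.ofReal M *
        (volume ({r : ℝ | y ∈ homothety c r⁻¹ ⁻¹' (P ∩ g ⁻¹' Iic 0)} ∩ Ioo 0 1) +
          volume ({r : ℝ | y ∉ homothety c r⁻¹ ⁻¹' (P ∩ g ⁻¹' Iic 0)} ∩ Ioi 1)) ≤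
      (g y).abs := by
  set N := P ∩ g ⁻¹' Iic 0
  have hN : StarConvex ℝ c N := hP.inter (hg.starConvex_preimage_Iic (by linarith))
  induction hgy : g y using EReal.rec with
  | bot | top => simp
  | coe a =>
    rw [EReal.abs_def, ← mul_div_cancel₀ |a| hM.ne']
    by_cases hyN : y ∈ N
    · have hempty : {r : ℝ | y ∉ homothety c r⁻¹ ⁻¹' N} ∩ Ioi 1 = ∅ :=
        eq_empty_of_forall_notMem fun r hr => hr.1 (hN.subset_preimage_homothety_inv hr.2.le hyN)
      rw [hempty, measure_empty, add_zero, ← sub_sub_cancel 1 (|a| / M)]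
      refine ofReal_mul_volume_le_of_subset_Icc hM.le fun r hr => ⟨?_, hr.2.2.le⟩
      have := hg.le_of_mem_preimage_homothety_inv hr.2.1 hr.2.2.le
        (preimage_mono inter_subset_right hr.1)
      rw [hgy, EReal.coe_le_coe_iff] at this
      rw [sub_le_comm, le_div_iff₀ hM]
      linarith [neg_le_abs a]
    · have hempty : {r : ℝ | y ∈ homothety c r⁻¹ ⁻¹' N} ∩ Ioo 0 1 = ∅ :=
        eq_empty_of_forall_notMem fun r hr =>
          hyN (hN.preimage_homothety_inv_subset hr.2.1 hr.2.2.le hr.1)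
      rw [hempty, measure_empty, zero_add, ← add_sub_cancel_left 1 (|a| / M)]
      refine ofReal_mul_volume_le_of_subset_Icc hM.le fun r hr => ⟨hr.2.le, ?_⟩
      have := hg.lt_of_notMem_preimage_homothety_inv hP hr.2.le hy hr.1
      rw [hgy, EReal.coe_lt_coe_iff] at this
      rw [← sub_le_iff_le_add', le_div_iff₀ hM]
      linarith [le_abs_self a]

variable [FiniteDimensional ℝ E] [MeasurableSpace E] [BorelSpace E]
  (μ : Measure E) [μ.IsAddHaarMeasure]

theorem ofReal_mul_mul_measure_le_lintegral_abs (hg : ConvexAlongRays g c (-M))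
    (hgm : Measurable g) (hM : 0 < M) (hPm : MeasurableSet P) (hP : StarConvex ℝ c P)
    {t : ℝ} (ht : 0 ≤ t) (hpow : (1 + t) ^ (Module.finrank ℝ E + 1) = 2) :
    ENNReal.ofReal M * (ENNReal.ofReal t * μ P) ≤ ∫⁻ y in P, (g y).abs ∂μ := by
  set N := P ∩ g ⁻¹' Iic 0
  have hN : StarConvex ℝ c N := hP.inter (hg.starConvex_preimage_Iic (by linarith))
  have hmeas : MeasurableSet {p : ℝ × E | p.2 ∈ homothety c p.1⁻¹ ⁻¹' N} :=
    (hPm.inter (hgm measurableSet_Iic)).preimage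
      (by simp only [AffineMap.homothety_apply, vsub_eq_sub, vadd_eq_add]; fun_prop)
  have h₁ : ∫⁻ r in Ioo (0 : ℝ) 1, μ (homothety c r⁻¹ ⁻¹' N) =
      ∫⁻ y in P, volume ({r : ℝ | y ∈ homothety c r⁻¹ ⁻¹' N} ∩ Ioo 0 1) ∂μ := by
    rw [← setLIntegral_measure_restrict_comm measurableSet_Ioo hmeas]
    refine setLIntegral_congr_fun measurableSet_Ioo fun r hr => ?_
    rw [Measure.restrict_apply' hPm, inter_eq_left.2
      ((hN.preimage_homothety_inv_subset hr.1 hr.2.le).trans inter_subset_left)]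
  have h₂ : ∫⁻ r in Ioo (1 : ℝ) (1 + t), μ (P \ homothety c r⁻¹ ⁻¹' N) =
      ∫⁻ y in P, volume ({r : ℝ | y ∉ homothety c r⁻¹ ⁻¹' N} ∩ Ioo 1 (1 + t)) ∂μ := by
    refine Eq.trans ?_ (setLIntegral_measure_restrict_comm
      (T := fun r => (homothety c r⁻¹ ⁻¹' N)ᶜ) measurableSet_Ioo hmeas.compl)
    simp_rw [Measure.restrict_apply' hPm, ← sdiff_eq_compl_inter]
  calc ENNReal.ofReal M * (ENNReal.ofReal t * μ P)
      ≤ ENNReal.ofReal M * ((∫⁻ r in Ioo (0 : ℝ) 1, μ (homothety c r⁻¹ ⁻¹' N)) +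
          ∫⁻ r in Ioo (1 : ℝ) (1 + t), μ (P \ homothety c r⁻¹ ⁻¹' N)) := by
        gcongr
        exact ofReal_mul_measure_le_lintegral_measure_dilates μ c N P ht hpow
    _ ≤ ENNReal.ofReal M * ∫⁻ y in P,
          (volume ({r : ℝ | y ∈ homothety c r⁻¹ ⁻¹' N} ∩ Ioo 0 1) +
            volume ({r : ℝ | y ∉ homothety c r⁻¹ ⁻¹' N} ∩ Ioo 1 (1 + t))) ∂μ := by
        rw [h₁, h₂]
        gcongr
        exact le_lintegral_add _ _
    _ ≤ ∫⁻ y in P, (g y).abs ∂μ := by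
        rw [← lintegral_const_mul' _ _ ENNReal.ofReal_ne_top]
        refine setLIntegral_mono' hPm fun y hy =>
          le_trans ?_ (hg.ofReal_mul_volume_le_abs hM hP hy)
        gcongr
        exact Ioo_subset_Ioi_self

end ConvexAlongRays

section Legendre

variable {E : Type*} [NormedAddCommGroup E] [InnerProductSpace ℝ E]

/-- Separate the point `(x, F x)` from the open strict epigraph of `F`; the separating
functional is not vertical because points high above `x` lie in the epigraph. -/
theorem ConvexOn.exists_subgradient [CompleteSpace E] {F : E → ℝ} (hF : ConvexOn ℝ univ F)
    (hFc : Continuous F) (x : E) : ∃ s, ∀ y, F x + ⟪y - x, s⟫ ≤ F y := by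
  have hconv : Convex ℝ {p : E × ℝ | p.1 ∈ univ ∧ F p.1 < p.2} := hF.convex_strict_epigraph
  have hopen : IsOpen {p : E × ℝ | p.1 ∈ univ ∧ F p.1 < p.2} := by
    simpa using isOpen_lt (hFc.comp continuous_fst) continuous_snd
  obtain ⟨f, hf⟩ := geometric_hahn_banach_open_point hconv hopen (x := (x, F x)) (by simp)
  set ℓ := f.comp (ContinuousLinearMap.inl ℝ E ℝ)
  set c := f (0, 1)
  have hsplit : ∀ y r, f (y, r) = ℓ y + r * c := fun y r => by
    rw [show ((y, r) : E × ℝ) = (y, 0) + r • (0, 1) by simp, map_add, map_smul, smul_eq_mul,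
      mul_comm]
    rfl
  have hc : c < 0 := by
    have := hf (x, F x + 1) (by simp)
    rw [hsplit, hsplit] at this
    linarith
  have hsupport : ∀ y, ℓ y + F y * c ≤ ℓ x + F x * c := fun y => by
    refine le_of_tendsto (f := fun r => ℓ y + r * c) (x := 𝓝[>] (F y))
      (Continuous.tendsto' (by fun_prop) _ _ rfl |>.mono_left nhdsWithin_le_nhds) ?_
    filter_upwards [self_mem_nhdsWithin] with r hr
    simpa only [hsplit] using (hf (y, r) ⟨trivial, hr⟩).le
  refine ⟨(InnerProductSpace.toDual ℝ E).symm ((-c)⁻¹ • ℓ), fun y => ?_⟩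
  rw [real_inner_comm, InnerProductSpace.toDual_symm_apply, smul_apply,
    map_sub, smul_eq_mul, ← le_sub_iff_add_le', inv_mul_le_iff₀ (neg_pos.2 hc)]
  linarith [hsupport y]

noncomputable def legendreTransform (F : E → ℝ) (s : E) : EReal :=
  ⨆ x, ((⟪x, s⟫ - F x : ℝ) : EReal)

variable {F : E → ℝ}

theorem legendreTransform_le_coe_iff {s : E} {A : ℝ} :
    legendreTransform F s ≤ A ↔ ∀ x, ⟪x, s⟫ - F x ≤ A := by
  simp only [legendreTransform, iSup_le_iff, EReal.coe_le_coe_iff]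

theorem legendreTransform_le_of_subgradient {x s : E} (h : ∀ y, F x + ⟪y - x, s⟫ ≤ F y) :
    legendreTransform F s ≤ ↑(⟪x, s⟫ - F x) :=
  legendreTransform_le_coe_iff.2 fun y => by linarith [h y, inner_sub_left (𝕜 := ℝ) y x s]

theorem legendreTransform_lineMap_le {a b : E} {A B θ : ℝ} (hθ₀ : 0 ≤ θ) (hθ₁ : θ ≤ 1)
    (ha : legendreTransform F a ≤ A) (hb : legendreTransform F b ≤ B) :
    legendreTransform F (lineMap a b θ) ≤ ↑((1 - θ) * A + θ * B) := by
  rw [legendreTransform_le_coe_iff] at *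
  intro y
  rw [AffineMap.lineMap_apply_module, inner_add_right, real_inner_smul_right,
    real_inner_smul_right]
  nlinarith [mul_le_mul_of_nonneg_left (ha y) (sub_nonneg.2 hθ₁),
    mul_le_mul_of_nonneg_left (hb y) hθ₀]

theorem measurable_legendreTransform [MeasurableSpace E] [OpensMeasurableSpace E] :
    Measurable (legendreTransform F) :=
  (lowerSemicontinuous_iSup fun _ =>
    (continuous_coe_real_ereal.comp (by fun_prop)).lowerSemicontinuous).measurable

theorem convexAlongRays_legendreTransform {c : E} {m : ℝ} (hc : legendreTransform F c ≤ m) :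
    ConvexAlongRays (legendreTransform F) c m := fun y A r hr₀ hr₁ hy => by
  rw [AffineMap.homothety_eq_lineMap, add_comm]
  exact legendreTransform_lineMap_le hr₀ hr₁ hc hy

end Legendre

theorem le_inv_mul_inv_mul_toReal_of_ofReal_mul_le {M t : ℝ} {V I : ENNReal} (hM : 0 ≤ M)
    (ht : 0 < t) (hV₀ : V ≠ 0) (hV : V ≠ ⊤) (hI : I ≠ ⊤)
    (h : ENNReal.ofReal M * (ENNReal.ofReal t * V) ≤ I) :
    M ≤ t⁻¹ * V.toReal⁻¹ * I.toReal := by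
  have := ENNReal.toReal_mono hI h
  rw [ENNReal.toReal_mul, ENNReal.toReal_mul, ENNReal.toReal_ofReal hM,
    ENNReal.toReal_ofReal ht.le] at this
  rw [← mul_inv, inv_mul_eq_div, le_div_iff₀ (mul_pos ht (ENNReal.toReal_pos hV₀ hV))]
  linarith

theorem sup_bound_via_legendre_L1_general
    (n : ℕ) (P : Set (EuclideanSpace ℝ (Fin n)))
    (hPc : IsCompact P) (hPconv : Convex ℝ P) (hPint : (interior P).Nonempty)
    (FP : EuclideanSpace ℝ (Fin n) → ℝ)
    (hFP : ∀ x, IsGreatest ((fun s => ⟪x, s⟫) '' P) (FP x))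
    (F F₀ : EuclideanSpace ℝ (Fin n) → ℝ)
    (hF : ConvexOn ℝ Set.univ F)
    (hsubF : ∀ x s, (∀ y, F x + ⟪y - x, s⟫ ≤ F y) → s ∈ P)
    (G : EuclideanSpace ℝ (Fin n) → EReal)
    (hG : ∀ s, G s = ⨆ x, ((⟪x, s⟫ - F x : ℝ) : EReal))
    (CP : ℝ) (hCP : ∀ x, FP x - F₀ x ≤ CP)
    (hint : ∫⁻ s in P, (G s).abs ∂volume ≠ ⊤) :
    ∀ x, F x - F₀ x ≤
      CP + ((2:ℝ) ^ (((n:ℝ) + 1))⁻¹ - 1)⁻¹ * ((volume P).toReal)⁻¹ *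
        (∫⁻ s in P, (G s).abs ∂volume).toReal := by
  intro x
  obtain rfl : G = legendreTransform F := funext hG
  obtain ⟨s₀, hs₀⟩ := hF.exists_subgradient (continuousOn_univ.1 (hF.continuousOn isOpen_univ)) x
  have hs₀P : s₀ ∈ P := hsubF x s₀ hs₀
  set M := F x - ⟪x, s₀⟫
  have hFx : F x - F₀ x ≤ CP + M := by linarith [(hFP x).2 ⟨s₀, hs₀P, rfl⟩, hCP x]
  set t : ℝ := (2:ℝ) ^ ((n:ℝ) + 1)⁻¹ - 1
  have ht : 0 < t := sub_pos.2 (Real.one_lt_rpow one_lt_two (by positivity))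
  have hpow : (1 + t) ^ (Module.finrank ℝ (EuclideanSpace ℝ (Fin n)) + 1) = 2 := by
    rw [finrank_euclideanSpace_fin, add_sub_cancel, ← Nat.cast_succ,
      Real.rpow_inv_natCast_pow zero_le_two n.succ_ne_zero]
  suffices M ≤ t⁻¹ * (volume P).toReal⁻¹ * (∫⁻ s in P, (legendreTransform F s).abs).toReal by
    linarith
  rcases le_or_gt M 0 with hM | hM
  · exact hM.trans (by positivity)
  have hray : ConvexAlongRays (legendreTransform F) s₀ (-M) :=
    convexAlongRays_legendreTransform (by simpa [M] using legendreTransform_le_of_subgradient hs₀)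
  exact le_inv_mul_inv_mul_toReal_of_ofReal_mul_le hM.le ht
    (Measure.measure_pos_of_nonempty_interior _ hPint).ne' hPc.measure_lt_top.ne hint
    (hray.ofReal_mul_mul_measure_le_lintegral_abs volume measurable_legendreTransform hM
      hPc.measurableSet (hPconv.starConvex hs₀P) ht.le hpow)

/-- Let `P ⊂ ℝⁿ` be compact convex with nonempty interior and support
function `F_P`. Let `F, F₀ : ℝⁿ → ℝ` be convex functions whose subgradient images are
contained in `P`, let `G` be the Legendre transform of `F`, suppose
`C_P := sup (F_P - F₀) < +∞` (i.e. `C_P` bounds `F_P - F₀` from above) and `|G|` is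
Lebesgue integrable on `P`. Then
`sup (F - F₀) ≤ C_P + (1/((2^{1/(n+1)} - 1) vol(P))) ∫_P |G| dV`. -/
theorem sup_bound_via_legendre_L1
    (n : ℕ) (P : Set (EuclideanSpace ℝ (Fin n)))
    (hPc : IsCompact P) (hPconv : Convex ℝ P) (hPint : (interior P).Nonempty)
    (FP : EuclideanSpace ℝ (Fin n) → ℝ)
    (hFP : ∀ x, IsGreatest ((fun s => ⟪x, s⟫) '' P) (FP x))
    (F F₀ : EuclideanSpace ℝ (Fin n) → ℝ)
    (hF : ConvexOn ℝ Set.univ F) (hF₀ : ConvexOn ℝ Set.univ F₀)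
    (hsubF : ∀ x s, (∀ y, F x + ⟪y - x, s⟫ ≤ F y) → s ∈ P)
    (hsubF₀ : ∀ x s, (∀ y, F₀ x + ⟪y - x, s⟫ ≤ F₀ y) → s ∈ P)
    (G : EuclideanSpace ℝ (Fin n) → EReal)
    (hG : ∀ s, G s = ⨆ x, ((⟪x, s⟫ - F x : ℝ) : EReal))
    (CP : ℝ) (hCP : ∀ x, FP x - F₀ x ≤ CP)
    (hint : ∫⁻ s in P, (G s).abs ∂volume ≠ ⊤) :
    ∀ x, F x - F₀ x ≤
      CP + ((2:ℝ) ^ (((n:ℝ) + 1))⁻¹ - 1)⁻¹ * ((volume P).toReal)⁻¹ *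
        (∫⁻ s in P, (G s).abs ∂volume).toReal :=
  sup_bound_via_legendre_L1_general n P hPc hPconv hPint FP hFP F F₀ hF hsubF G hG CP hCP hint
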